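/- arXiv:1804.05568 — 5 statements merged into one kernel-verified Lean document; each statement's English description precedes it below -/
import Mathlib

section
/- Define the desingularized values \zeta_r^{des}(-k_1,\dots,-k_r) for k_i \in \mathbb{N}_0 by \zeta_r^{des}(-k_1,\dots,-k_r) = (-1)^{k_1+\cdots+k_r} \sum \prod_{i=1}^r \frac{k_i!}{\prod_{j=i}^r \nu_{ij}!} B_{\nu_{ii}+\cdots+\nu_{ir}+1}, where the sum is over nonnegative integers \nu_{ij} (1 \le i \le j \le r) with \nu_{1i}+\cdots+\nu_{ii} = k_i for each i, and B_m are Bernoulli numbers. Then the generating function \sum_{k_1,\dots,k_r \ge 0} \frac{(-t_1)^{k_1}\cdots(-t_r)^{k_r}}{k_1!\cdots k_r!} \zeta_r^{des}(-k_1,\dots,-k_r) equals \prod_{i=1}^r \frac{(1-t_i-\cdots-t_r)e^{t_i+\cdots+t_r}-1}{(e^{t_i+\cdots+t_r}-1)^2} in \mathbb{Q}[[t_1,\dots,t_r]]. -/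
/-- The multivariate power series `f(∑_{j ∈ S} t_j)` obtained by substituting the
sum of the variables indexed by `S` into the one-variable power series `f`. -/
noncomputable def substSum {r : ℕ} (f : PowerSeries ℚ) (S : Finset (Fin r)) :
    MvPowerSeries (Fin r) ℚ :=
  fun d => if d.support ⊆ S then
    (d.multinomial : ℚ) * PowerSeries.coeff (d.sum fun _ n => n) f else 0

/-- `Zgen r f = ∏_{i=1}^r f(t_i + ⋯ + t_r)` as a formal power series in `t_1, …, t_r`. -/
noncomputable def Zgen (r : ℕ) (f : PowerSeries ℚ) : MvPowerSeries (Fin r) ℚ :=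
  ∏ i : Fin r, substSum f (Finset.Ici i)

/-- View a power series in the variables `t_2, …, t_{r+1}` (i.e. in `r` variables)
as a power series in `t_1, …, t_{r+1}` not involving the first variable. -/
noncomputable def shiftVar {r : ℕ} (f : MvPowerSeries (Fin r) ℚ) :
    MvPowerSeries (Fin (r + 1)) ℚ :=
  fun d => if d 0 = 0 then
    f (Finsupp.comapDomain Fin.succ d (Fin.succ_injective r).injOn) else 0

/-- The desingularized value `ζ_r^{des}(-k_1, …, -k_r)`: namely `k_1! ⋯ k_r!` times
the coefficient of `(-t_1)^{k_1} ⋯ (-t_r)^{k_r}` in `Zgen r f`. -/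
noncomputable def zetaDes (r : ℕ) (f : PowerSeries ℚ) (k : Fin r → ℕ) : ℚ :=
  (∏ i, ((-1 : ℚ) ^ (k i) * (k i).factorial)) *
    MvPowerSeries.coeff (Finsupp.equivFunOnFinite.symm k) (Zgen r f)

/-- The explicit Bernoulli-number formula for the desingularized values:
`ζ_r^{des}(-k_1,…,-k_r) = (-1)^{k_1+⋯+k_r} ∑_ν ∏_{i=1}^r (k_i!/∏_{j=i}^r ν_{ij}!)
B_{ν_{ii}+⋯+ν_{ir}+1}`, the sum being over nonnegative integers `ν_{ij}`
(`1 ≤ i ≤ j ≤ r`) with `ν_{1i}+⋯+ν_{ii} = k_i` for each `i`.  Here `ν j i`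
denotes `ν_{ij}` (the `j`-th column is `ν j`). -/
noncomputable def zetaBernoulli (r : ℕ) (k : Fin r → ℕ) : ℚ :=
  (-1 : ℚ) ^ (∑ i, k i) *
    ∑ ν ∈ Finset.filter (fun ν : Fin r → Fin r → ℕ => ∀ j i : Fin r, (j : ℕ) < (i : ℕ) → ν j i = 0)
        (Fintype.piFinset fun j : Fin r => Finset.Nat.antidiagonalTuple r (k j)),
      ∏ i : Fin r,
        (((k i).factorial : ℚ) / ∏ j ∈ Finset.Ici i, ((ν j i).factorial : ℚ)) *
          bernoulli ((∑ j ∈ Finset.Ici i, ν j i) + 1)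

/-!
Differentiating `B(x) (eˣ - 1) = x`, where `B(x) = ∑ Bₘ xᵐ / m!`, gives
`(eˣ - 1)² B'(x) = (1 - x) eˣ - 1`, so `F = B'` has coefficients `B_{n+1} / n!`.
By the multinomial theorem the coefficient of `∏_{j ≥ i} t_j^{ν_j}` in `F(t_i + ⋯ + t_r)` is
`B_{ν_i + ⋯ + ν_r + 1} / ∏_{j ≥ i} ν_j!`, so the coefficient of `t^d` in the product over `i`
is a sum over upper triangular matrices `(ν_{ij})` with column sums `d_j`: this is
`ζ^des(-d)` up to the normalisation `∏_j (-1)^{d_j} / d_j!`.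
-/

open scoped Nat
open Finset

namespace PowerSeries

variable (A : Type*) [CommRing A] [Algebra ℚ A]

theorem exp_sub_one_sq_mul_derivative_bernoulliPowerSeries :
    (exp A - 1) ^ 2 * d⁄dX A (bernoulliPowerSeries A) = (1 - X) * exp A - 1 := by
  have hB := bernoulliPowerSeries_mul_exp_sub_one A
  have hB' :
      bernoulliPowerSeries A * exp A + (exp A - 1) * d⁄dX A (bernoulliPowerSeries A) = 1 := by
    simpa [Derivation.leibniz, derivative_exp] using congrArg (d⁄dX A) hB
  linear_combination (exp A - 1) * hB' - exp A * hB

theorem coeff_derivative_bernoulliPowerSeries (n : ℕ) :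
    coeff n (d⁄dX A (bernoulliPowerSeries A)) = algebraMap ℚ A (bernoulli (n + 1) / n !) := by
  rw [coeff_derivative, bernoulliPowerSeries, coeff_mk,
    show (n + 1 : A) = algebraMap ℚ A (n + 1) by simp, ← map_mul, Nat.factorial_succ]
  congr 1
  push_cast
  field_simp

theorem eq_derivative_bernoulliPowerSeries [IsDomain A] {F : A⟦X⟧}
    (hF : (exp A - 1) ^ 2 * F = (1 - X) * exp A - 1) : F = d⁄dX A (bernoulliPowerSeries A) := by
  have hexp : exp A - 1 ≠ 0 := fun h => by simpa using congrArg (coeff 1) h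
  exact mul_left_cancel₀ (pow_ne_zero 2 hexp)
    (hF.trans (exp_sub_one_sq_mul_derivative_bernoulliPowerSeries A).symm)

end PowerSeries

theorem Finsupp.prod_factorial_mul_multinomial_of_support_subset {α : Type*} {e : α →₀ ℕ}
    {s : Finset α} (hs : e.support ⊆ s) : (∏ j ∈ s, (e j)!) * e.multinomial = (∑ j ∈ s, e j)! := by
  rw [multinomial_eq_of_support_subset hs, Nat.multinomial_spec]

section substSum

variable {r : ℕ} {f : PowerSeries ℚ} {S : Finset (Fin r)} {e : Fin r →₀ ℕ}

theorem coeff_substSum_of_not_support_subset (he : ¬ e.support ⊆ S) :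
    MvPowerSeries.coeff e (substSum f S) = 0 :=
  if_neg he

theorem coeff_substSum_of_support_subset {a : ℕ → ℚ} (hf : ∀ n, PowerSeries.coeff n f = a n / n !)
    (he : e.support ⊆ S) :
    MvPowerSeries.coeff e (substSum f S) = (∏ j ∈ S, ((e j)! : ℚ))⁻¹ * a (∑ j ∈ S, e j) := by
  have hsum : (e.sum fun _ n => n) = ∑ j ∈ S, e j := Finsupp.sum_of_support_subset _ he _ (by simp)
  have hfact : (∏ j ∈ S, ((e j)! : ℚ)) * e.multinomial = (∑ j ∈ S, e j)! := by
    exact_mod_cast Finsupp.prod_factorial_mul_multinomial_of_support_subset he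
  obtain ⟨hprod, hmult⟩ := mul_ne_zero_iff.1 (hfact ▸ by positivity :
    (∏ j ∈ S, ((e j)! : ℚ)) * e.multinomial ≠ 0)
  rw [MvPowerSeries.coeff_apply, substSum, if_pos he, hf, hsum, ← hfact]
  field_simp

end substSum

theorem sum_finsuppAntidiag_support_subset_Ici_eq_sum_piFinset {M : Type*} [AddCommMonoid M] {r : ℕ}
    (d : Fin r →₀ ℕ) (g : (Fin r → Fin r → ℕ) → M) :
    ∑ l ∈ (finsuppAntidiag univ d).filter (fun l => ∀ i, (l i).support ⊆ Ici i),
        g (fun j i => l i j) =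
      ∑ ν ∈ (Fintype.piFinset fun j : Fin r => Nat.antidiagonalTuple r (d j)).filter
          (fun ν : Fin r → Fin r → ℕ => ∀ j i : Fin r, (j : ℕ) < (i : ℕ) → ν j i = 0), g ν := by
  refine sum_nbij' (fun l j i => l i j)
    (fun ν => Finsupp.equivFunOnFinite.symm fun i => Finsupp.equivFunOnFinite.symm fun j => ν j i)
    ?_ ?_ (fun l _ => by ext; rfl) (fun ν _ => rfl) (fun l _ => rfl)
  · intro l hl
    simp only [mem_filter, mem_finsuppAntidiag, Fintype.mem_piFinset,
      Nat.mem_antidiagonalTuple] at hl ⊢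
    obtain ⟨⟨hsum, -⟩, hsupp⟩ := hl
    refine ⟨fun j => by simpa [Finsupp.finsetSum_apply] using congrArg (· j) hsum,
      fun j i hji => ?_⟩
    by_contra h
    exact Fin.not_le.2 hji (mem_Ici.1 (hsupp i (Finsupp.mem_support_iff.2 h)))
  · intro ν hν
    simp only [mem_filter, mem_finsuppAntidiag, Fintype.mem_piFinset,
      Nat.mem_antidiagonalTuple] at hν ⊢
    obtain ⟨hsum, hzero⟩ := hν
    refine ⟨⟨Finsupp.ext fun j => by simpa [Finsupp.finsetSum_apply] using hsum j,
      subset_univ _⟩, fun i j hj => mem_Ici.2 (not_lt.1 fun hji => ?_)⟩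
    exact Finsupp.mem_support_iff.1 hj (by simpa using hzero j i hji)

theorem prod_neg_one_pow_div_factorial_mul_zetaBernoulli (r : ℕ) (k : Fin r → ℕ) :
    (∏ i, ((-1 : ℚ) ^ k i / (k i)!)) * zetaBernoulli r k =
      ∑ ν ∈ (Fintype.piFinset fun j : Fin r => Nat.antidiagonalTuple r (k j)).filter
          (fun ν : Fin r → Fin r → ℕ => ∀ j i : Fin r, (j : ℕ) < (i : ℕ) → ν j i = 0),
        ∏ i, (∏ j ∈ Ici i, ((ν j i)! : ℚ))⁻¹ * bernoulli (∑ j ∈ Ici i, ν j i + 1) := by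
  rw [zetaBernoulli, ← prod_pow_eq_pow_sum, mul_sum, mul_sum]
  refine sum_congr rfl fun ν _ => ?_
  rw [← prod_mul_distrib, ← prod_mul_distrib]
  refine prod_congr rfl fun i _ => ?_
  have hsq : (-1 : ℚ) ^ k i * (-1) ^ k i = 1 := by rw [← mul_pow]; simp
  field_simp
  linear_combination (bernoulli (∑ j ∈ Ici i, ν j i + 1)) * hsq

/-- The generating function `∑_{k} ((-t_1)^{k_1}⋯(-t_r)^{k_r})/(k_1!⋯k_r!)
ζ_r^{des}(-k_1,…,-k_r)` of the Bernoulli-number values equals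
`∏_{i=1}^r ((1-t_i-⋯-t_r)e^{t_i+⋯+t_r}-1)/((e^{t_i+⋯+t_r}-1)^2)`, stated
coefficientwise in `ℚ[[t_1,…,t_r]]`. -/
theorem zetaBernoulli_generating_function (F : PowerSeries ℚ)
    (hF : (PowerSeries.exp ℚ - 1) ^ 2 * F =
      (1 - PowerSeries.X) * PowerSeries.exp ℚ - 1) (r : ℕ) (d : Fin r →₀ ℕ) :
    MvPowerSeries.coeff d (Zgen r F) =
      (∏ i, ((-1 : ℚ) ^ (d i) / ((d i).factorial : ℚ))) * zetaBernoulli r (fun i => d i) := by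
  have hcoeff (n : ℕ) : PowerSeries.coeff n F = bernoulli (n + 1) / n ! := by
    rw [PowerSeries.eq_derivative_bernoulliPowerSeries ℚ hF,
      PowerSeries.coeff_derivative_bernoulliPowerSeries, Algebra.algebraMap_self, RingHom.id_apply]
  have hvanish : ∀ l ∈ finsuppAntidiag univ d,
      ∏ i, MvPowerSeries.coeff (l i) (substSum F (Ici i)) ≠ 0 → ∀ i, (l i).support ⊆ Ici i :=
    fun l _ hl i => by_contra fun hi =>
      hl (prod_eq_zero (mem_univ i) (coeff_substSum_of_not_support_subset hi))
  rw [Zgen, MvPowerSeries.coeff_prod, ← sum_filter_of_ne hvanish,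
    prod_neg_one_pow_div_factorial_mul_zetaBernoulli,
    ← sum_finsuppAntidiag_support_subset_Ici_eq_sum_piFinset]
  exact sum_congr rfl fun l hl => prod_congr rfl fun i _ =>
    coeff_substSum_of_support_subset hcoeff ((mem_filter.1 hl).2 i)
end

section
/- With \zeta_r^{des}(-k_1,\dots,-k_r) defined by the Bernoulli-number formula (explicitly: the coefficient extraction from Z_r(t_1,\dots,t_r) = \prod_{i=1}^r F(t_i+\cdots+t_r) with F(u) = ((1-u)e^u-1)/(e^u-1)^2), for all k_1,\dots,k_r \in \mathbb{N}_0 one has \zeta_r^{des}(-k_1,\dots,-k_r) = \sum_{i_2+j_2=k_2, \dots, i_r+j_r=k_r} \prod_{a=2}^r \binom{k_a}{i_a} \; \zeta_{r-1}^{des}(-i_2,\dots,-i_r) \cdot \zeta_1^{des}(-k_1-j_2-\cdots-j_r). -/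
/-!
Write `expCoeff G k = (∏ k_x!) · [t^k] G`, so that `ζ_r^{des}(-k) = (-1)^{|k|} expCoeff (Z_r) k`.
Since `Z_{r+1}(t_1, …, t_{r+1}) = Z_r(t_2, …, t_{r+1}) · F(t_1 + ⋯ + t_{r+1})`, the Leibniz rule
for exponential coefficients expands `expCoeff Z_{r+1} k` over splittings `k = i + j` with
binomial weights. The first factor does not involve `t_1`, which forces `i_1 = 0`, and the
exponential coefficients of `F(t_1 + ⋯ + t_{r+1})` at `j` depend only on `|j|`, giving
`ζ_1^{des}(-k_1 - j_2 - ⋯ - j_{r+1})` up to sign.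
-/

open Finset MvPowerSeries

theorem Fin.sum_piFinset_succ {M α : Type*} [AddCommMonoid M] {n : ℕ}
    (S : Fin (n + 1) → Finset α) (g : (Fin (n + 1) → α) → M) :
    ∑ m ∈ Fintype.piFinset S, g m =
      ∑ p ∈ S 0, ∑ m ∈ Fintype.piFinset (fun a => S a.succ), g (Fin.cons p m) := by
  classical
  rw [← filter_true (Fintype.piFinset S), filter_piFinset_eq_map_consEquiv S (fun _ => True),
    filter_true, sum_map, sum_product]
  rfl

namespace Finsupp

theorem sum_antidiagonal_equivFunOnFinite_symm {σ M : Type*} [Fintype σ] [DecidableEq σ]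
    [AddCommMonoid M] (k : σ → ℕ) (g : (σ →₀ ℕ) × (σ →₀ ℕ) → M) :
    ∑ p ∈ antidiagonal (equivFunOnFinite.symm k), g p =
      ∑ m ∈ Fintype.piFinset fun x => antidiagonal (k x),
        g (equivFunOnFinite.symm fun x => (m x).1, equivFunOnFinite.symm fun x => (m x).2) := by
  refine sum_nbij' (fun p x => (p.1 x, p.2 x))
    (fun m => (equivFunOnFinite.symm fun x => (m x).1, equivFunOnFinite.symm fun x => (m x).2))
    ?_ ?_ (fun p _ => by ext <;> rfl) (fun m _ => rfl) (fun p _ => congrArg g (by ext <;> rfl))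
  · intro p hp
    simp only [HasAntidiagonal.mem_antidiagonal, Fintype.mem_piFinset] at hp ⊢
    intro x
    simpa using DFunLike.congr_fun hp x
  · intro m hm
    simp only [HasAntidiagonal.mem_antidiagonal, Fintype.mem_piFinset] at hm ⊢
    ext x
    simpa using hm x

theorem equivFunOnFinite_symm_eq_embDomain_succEmb {n : ℕ} {k : Fin (n + 1) → ℕ}
    (hk : k 0 = 0) :
    equivFunOnFinite.symm k = embDomain (Fin.succEmb n) (equivFunOnFinite.symm (Fin.tail k)) := by
  ext x
  cases x using Fin.cases with
  | zero =>
    rw [embDomain_of_notMem_range _ _ 0 (by simp)]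
    exact hk
  | succ a =>
    rw [← Fin.coe_succEmb, embDomain_apply_self]
    rfl

end Finsupp

namespace MvPowerSeries

section ExpCoeff

variable {σ R : Type*} [Fintype σ] [CommSemiring R]

noncomputable def expCoeff (G : MvPowerSeries σ R) (k : σ → ℕ) : R :=
  (∏ x, ((k x).factorial : R)) * coeff (Finsupp.equivFunOnFinite.symm k) G

theorem expCoeff_injective [IsDomain R] [CharZero R] :
    Function.Injective (expCoeff : MvPowerSeries σ R → (σ → ℕ) → R) := by
  intro G H h
  ext d
  have hd := congr_fun h d
  rw [expCoeff, expCoeff, Finsupp.equivFunOnFinite_symm_coe] at hd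
  exact mul_left_cancel₀
    (prod_ne_zero_iff.mpr fun x _ => Nat.cast_ne_zero.mpr (d x).factorial_ne_zero) hd

theorem expCoeff_mul [DecidableEq σ] (G H : MvPowerSeries σ R) (k : σ → ℕ) :
    expCoeff (G * H) k =
      ∑ m ∈ Fintype.piFinset fun x => antidiagonal (k x),
        (∏ x, ((k x).choose (m x).1 : R)) * expCoeff G (fun x => (m x).1) *
          expCoeff H (fun x => (m x).2) := by
  rw [expCoeff, coeff_mul, Finsupp.sum_antidiagonal_equivFunOnFinite_symm, mul_sum]
  refine sum_congr rfl fun m hm => ?_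
  have hfact : ∀ x, ((k x).factorial : R) =
      (k x).choose (m x).1 * (m x).1.factorial * (m x).2.factorial := by
    intro x
    have hx := HasAntidiagonal.mem_antidiagonal.mp (Fintype.mem_piFinset.mp hm x)
    rw [← hx, ← Nat.add_choose_mul_factorial_mul_factorial, Nat.choose_symm_add]
    push_cast
    ring
  simp only [expCoeff, hfact, prod_mul_distrib]
  ring

end ExpCoeff

variable {R : Type*} [CommSemiring R] {n : ℕ}

theorem expCoeff_rename_succ (G : MvPowerSeries (Fin n) R) (k : Fin (n + 1) → ℕ) :
    expCoeff (rename Fin.succ G) k = if k 0 = 0 then expCoeff G (Fin.tail k) else 0 := by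
  split_ifs with hk
  · rw [expCoeff, expCoeff, Finsupp.equivFunOnFinite_symm_eq_embDomain_succEmb hk,
      ← Fin.coe_succEmb, coeff_embDomain_rename, Fin.prod_univ_succ, hk]
    simp [Fin.tail]
  · rw [expCoeff, coeff_rename_eq_zero, mul_zero]
    rintro ⟨d, hd⟩
    have h0 := DFunLike.congr_fun hd 0
    rw [Finsupp.mapDomain_of_notMem_range _ 0 (by simp), eq_comm] at h0
    exact hk h0

theorem expCoeff_rename_succ_mul (G : MvPowerSeries (Fin n) R) (H : MvPowerSeries (Fin (n + 1)) R)
    (k : Fin (n + 1) → ℕ) :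
    expCoeff (rename Fin.succ G * H) k =
      ∑ m ∈ Fintype.piFinset fun a : Fin n => antidiagonal (k a.succ),
        (∏ a, ((k a.succ).choose (m a).1 : R)) * expCoeff G (fun a => (m a).1) *
          expCoeff H (Fin.cons (k 0) fun a => (m a).2) := by
  rw [expCoeff_mul, Fin.sum_piFinset_succ, sum_eq_single (0, k 0)]
  · refine sum_congr rfl fun m _ => ?_
    have hsnd : (fun x => (Fin.cons (α := fun _ => ℕ × ℕ) (0, k 0) m x).2) =
        Fin.cons (k 0) fun a => (m a).2 := by
      ext x
      cases x using Fin.cases <;> rfl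
    simp only [Fin.prod_univ_succ, Fin.cons_zero, Nat.choose_zero_right, expCoeff_rename_succ,
      if_pos, hsnd, Nat.cast_one, one_mul]
    rfl
  · intro p hp hp0
    have h1 : p.1 ≠ 0 := by
      rintro h
      rw [HasAntidiagonal.mem_antidiagonal] at hp
      exact hp0 (Prod.ext h (by omega))
    exact sum_eq_zero fun m _ => by simp [expCoeff_rename_succ, h1]
  · simp

end MvPowerSeries

section Zgen

variable {r : ℕ}

theorem expCoeff_substSum (f : PowerSeries ℚ) (S : Finset (Fin r)) (k : Fin r → ℕ) :
    expCoeff (substSum f S) k =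
      if ∀ x, k x ≠ 0 → x ∈ S then (∑ x, k x).factorial * PowerSeries.coeff (∑ x, k x) f
      else 0 := by
  have hsupp : (Finsupp.equivFunOnFinite.symm k).support ⊆ S ↔ ∀ x, k x ≠ 0 → x ∈ S := by
    simp [subset_iff]
  rw [expCoeff, coeff_apply, substSum]
  simp only [hsupp]
  split_ifs
  · rw [Finsupp.multinomial_eq_of_support_subset (subset_univ _),
      Finsupp.sum_fintype _ _ fun _ => rfl, ← mul_assoc]
    exact_mod_cast congrArg (· * PowerSeries.coeff (∑ x, k x) f)
      (congrArg (Nat.cast (R := ℚ)) (Nat.multinomial_spec univ k))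
  · rw [mul_zero]

theorem substSum_Ici_succ (f : PowerSeries ℚ) (i : Fin r) :
    substSum f (Ici i.succ) = rename Fin.succ (substSum f (Ici i)) := by
  refine expCoeff_injective (funext fun k => ?_)
  rw [expCoeff_substSum, expCoeff_rename_succ, expCoeff_substSum, Fin.sum_univ_succ]
  by_cases hk : k 0 = 0
  · simp [hk, Fin.forall_fin_succ, Fin.tail]
  · simp [hk, Fin.forall_fin_succ]

theorem Zgen_succ (f : PowerSeries ℚ) :
    Zgen (r + 1) f = rename Fin.succ (Zgen r f) * substSum f univ := by
  rw [Zgen, Fin.prod_univ_succ, Zgen, map_prod, mul_comm]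
  congr 1
  · exact prod_congr rfl fun i _ => substSum_Ici_succ f i
  · congr 1
    ext x
    simp

theorem zetaDes_eq_expCoeff (f : PowerSeries ℚ) (k : Fin r → ℕ) :
    zetaDes r f k = (-1) ^ (∑ x, k x) * expCoeff (Zgen r f) k := by
  rw [zetaDes, expCoeff, prod_mul_distrib, prod_pow_eq_pow_sum, mul_assoc]

theorem zetaDes_one (f : PowerSeries ℚ) (n : ℕ) :
    zetaDes 1 f (fun _ => n) = (-1) ^ n * n.factorial * PowerSeries.coeff n f := by
  rw [zetaDes_eq_expCoeff, Zgen, Fin.prod_univ_one, expCoeff_substSum]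
  simp [mul_assoc]

end Zgen

theorem zetaDes_recurrence_general (F : PowerSeries ℚ) (r : ℕ) (k : Fin (r + 1) → ℕ) :
    zetaDes (r + 1) F k =
      ∑ m ∈ Fintype.piFinset fun a : Fin r => Finset.HasAntidiagonal.antidiagonal (k a.succ),
        (∏ a : Fin r, ((k a.succ).choose (m a).1 : ℚ)) *
          zetaDes r F (fun a => (m a).1) *
          zetaDes 1 F (fun _ => k 0 + ∑ a : Fin r, (m a).2) := by
  rw [zetaDes_eq_expCoeff, Zgen_succ, expCoeff_rename_succ_mul, mul_sum]
  refine sum_congr rfl fun m hm => ?_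
  have hk : ∑ x, k x = ∑ a, (m a).1 + (k 0 + ∑ a, (m a).2) := by
    rw [Fin.sum_univ_succ, ← sum_congr rfl fun a _ =>
      HasAntidiagonal.mem_antidiagonal.mp (Fintype.mem_piFinset.mp hm a), sum_add_distrib]
    ring
  rw [zetaDes_eq_expCoeff, zetaDes_one, expCoeff_substSum, if_pos (by simp), Fin.sum_cons, hk,
    pow_add]
  ring

/-- Recurrence for desingularized values: for `k_1, …, k_r ∈ ℕ₀`,
`ζ_r^{des}(-k_1,…,-k_r) = ∑_{i_a+j_a=k_a (a=2..r)} ∏_{a=2}^r C(k_a, i_a)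
ζ_{r-1}^{des}(-i_2,…,-i_r) ζ_1^{des}(-k_1-j_2-⋯-j_r)`.  Stated for depth `r + 1`. -/
theorem zetaDes_recurrence (F : PowerSeries ℚ)
    (hF : (PowerSeries.exp ℚ - 1) ^ 2 * F =
      (1 - PowerSeries.X) * PowerSeries.exp ℚ - 1) (r : ℕ) (k : Fin (r + 1) → ℕ) :
    zetaDes (r + 1) F k =
      ∑ m ∈ Fintype.piFinset fun a : Fin r => Finset.HasAntidiagonal.antidiagonal (k a.succ),
        (∏ a : Fin r, ((k a.succ).choose (m a).1 : ℚ)) *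
          zetaDes r F (fun a => (m a).1) *
          zetaDes 1 F (fun _ => k 0 + ∑ a : Fin r, (m a).2) :=
  zetaDes_recurrence_general F r k
end

section
/- For every k \in \mathbb{N}_0, \zeta_{EMS}(-k) = \sum_{i+j=k} \binom{k}{i} \frac{(-1)^j}{i+1} \zeta^{des}(-j), where \zeta_{EMS}(-k) := k! times the coefficient of (-t)^k in G(t) := (t-(e^t-1))/(t(e^t-1)) and \zeta^{des}(-j) := j! times the coefficient of (-t)^j in F(t) := ((1-t)e^t-1)/(e^t-1)^2. -/
/-!
Substituting `t ↦ -t` in the equation for `G` and multiplying by `eᵗ` turns it into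
`t (eᵗ - 1) G(-t) = (1 - t) eᵗ - 1 = (eᵗ - 1)² F(t)`, so `G(-t) = F(t) (eᵗ - 1) / t`.
Comparing coefficients of `tᵏ`, with `(eᵗ - 1) / t = ∑ tⁱ / (i + 1)!`, gives the formula,
since `k! / (i + 1)! = C(k, i) j! / (i + 1)` when `i + j = k`.
-/

/-- The depth-one value attached to a one-variable power series `f`:
`k!` times the coefficient of `(-t)^k` in `f`. -/
noncomputable def zetaOne (f : PowerSeries ℚ) (k : ℕ) : ℚ :=
  (-1 : ℚ) ^ k * (k.factorial : ℚ) * PowerSeries.coeff k f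

open Nat Finset

namespace PowerSeries

variable {A : Type*} [CommRing A] [Algebra ℚ A]

variable (A) in
noncomputable def expSubOneDivX : A⟦X⟧ :=
  mk fun n => algebraMap ℚ A (1 / (n + 1)!)

@[simp]
theorem coeff_expSubOneDivX (n : ℕ) : coeff n (expSubOneDivX A) = algebraMap ℚ A (1 / (n + 1)!) :=
  coeff_mk _ _

theorem X_mul_expSubOneDivX : X * expSubOneDivX A = exp A - 1 := by
  ext (_ | n)
  · simp
  · simp [coeff_succ_X_mul]

theorem isUnit_expSubOneDivX : IsUnit (expSubOneDivX A) :=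
  isUnit_iff_constantCoeff.mpr (by simp [← coeff_zero_eq_constantCoeff_apply])

theorem rescale_neg_one_eq_expSubOneDivX_mul {F G : A⟦X⟧}
    (hF : (exp A - 1) ^ 2 * F = (1 - X) * exp A - 1)
    (hG : X * (exp A - 1) * G = X - (exp A - 1)) :
    rescale (-1) G = expSubOneDivX A * F := by
  set S := expSubOneDivX A
  have hE : exp A = X * S + 1 := by rw [X_mul_expSubOneDivX, sub_add_cancel]
  have hG' := congrArg (rescale (-1 : A)) hG
  simp only [map_mul, map_sub, map_one, rescale_neg_one_X] at hG'
  have hexp : (X * S + 1) * rescale (-1) (exp A) = 1 := by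
    rw [← hE]
    exact exp_mul_exp_neg_eq_one
  rw [hE] at hF
  have key : X * (X * (S * rescale (-1) G)) = X * (X * (S * (S * F))) := by
    linear_combination (X * S + 1) * hG' + (X * rescale (-1) G - 1) * hexp - hF
  exact isUnit_expSubOneDivX.mul_left_cancel (X_mul_cancel (X_mul_cancel key))

end PowerSeries

theorem Nat.cast_add_factorial_div_succ_factorial {K : Type*} [Field K] [CharZero K]
    (i j : ℕ) :
    ((i + j)! : K) / (i + 1)! = (i + j).choose i * j ! / (i + 1) := by
  rw [← add_choose_mul_factorial_mul_factorial i j, ← choose_symm_add, factorial_succ]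
  have : (i ! : K) ≠ 0 := Nat.cast_ne_zero.mpr (factorial_ne_zero i)
  push_cast
  field_simp

/-- For every `k ∈ ℕ₀`, `ζ_{EMS}(-k) = ∑_{i+j=k} C(k,i) (-1)^j/(i+1) ζ^{des}(-j)`,
where `ζ_{EMS}(-k) = k![(-t)^k] G(t)` with `G(t) = (t-(e^t-1))/(t(e^t-1))` and
`ζ^{des}(-j) = j![(-t)^j] F(t)` with `F(t) = ((1-t)e^t-1)/(e^t-1)^2`. -/
theorem zetaEMS_eq_sum_zetaDes (F G : PowerSeries ℚ)
    (hF : (PowerSeries.exp ℚ - 1) ^ 2 * F =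
      (1 - PowerSeries.X) * PowerSeries.exp ℚ - 1)
    (hG : (PowerSeries.X * (PowerSeries.exp ℚ - 1)) * G =
      PowerSeries.X - (PowerSeries.exp ℚ - 1)) (k : ℕ) :
    zetaOne G k =
      ∑ m ∈ Finset.HasAntidiagonal.antidiagonal k,
        (k.choose m.1 : ℚ) * ((-1 : ℚ) ^ m.2 / (m.1 + 1 : ℚ)) * zetaOne F m.2 := by
  have hcoeff := congrArg (PowerSeries.coeff k)
    (PowerSeries.rescale_neg_one_eq_expSubOneDivX_mul hF hG)
  rw [PowerSeries.coeff_rescale, PowerSeries.coeff_mul] at hcoeff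
  rw [zetaOne, mul_right_comm, hcoeff, sum_mul]
  refine sum_congr rfl fun ⟨i, j⟩ hij => ?_
  obtain rfl := HasAntidiagonal.mem_antidiagonal.mp hij
  simp only [PowerSeries.coeff_expSubOneDivX, zetaOne, Algebra.algebraMap_self, RingHom.id_apply]
  have hsign : ((-1 : ℚ) ^ j) * (-1) ^ j = 1 := by rw [← mul_pow, neg_one_mul, neg_neg, one_pow]
  calc _ = PowerSeries.coeff j F * ((i + j)! / (i + 1)!) := by ring
    _ = _ := by
      rw [Nat.cast_add_factorial_div_succ_factorial]
      linear_combination (-(PowerSeries.coeff j F) * (i + j).choose i * j ! / (i + 1)) * hsign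
end

section
/- For every k \in \mathbb{N}_0, \zeta^{des}(-k) = (-1)^k \sum_{i+j=k} \binom{k}{i} B_i \, \zeta_{EMS}(-j), where B_i are the Bernoulli numbers, \zeta^{des}(-k) := k! times the coefficient of (-t)^k in ((1-t)e^t-1)/(e^t-1)^2, and \zeta_{EMS}(-j) := j! times the coefficient of (-t)^j in (t-(e^t-1))/(t(e^t-1)). -/
open Finset Nat

namespace PowerSeries

theorem factorial_mul_coeff_mul {R : Type*} [CommSemiring R] (f g : PowerSeries R) (k : ℕ) :
    (k ! : R) * coeff k (f * g) = ∑ m ∈ antidiagonal k,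
      (k.choose m.1 : R) * (m.1 ! * coeff m.1 f) * (m.2 ! * coeff m.2 g) := by
  rw [coeff_mul, mul_sum]
  refine sum_congr rfl fun m hm => ?_
  obtain rfl := mem_antidiagonal.mp hm
  rw [← add_choose_mul_factorial_mul_factorial, choose_symm_add]
  push_cast
  ring

section Bernoulli

variable {A : Type*} [CommRing A] [Algebra ℚ A]

theorem exp_sub_one_ne_zero [Nontrivial A] : exp A - 1 ≠ 0 := fun h => by
  simpa using congrArg (coeff 1) h

theorem evalNegHom_exp_sub_one_mul_exp : (evalNegHom (exp A) - 1) * exp A = -(exp A - 1) := by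
  rw [sub_mul, mul_comm, exp_mul_exp_neg_eq_one]
  ring

theorem eq_bernoulliPowerSeries_mul_evalNegHom [IsDomain A] {F G : PowerSeries A}
    (hF : (exp A - 1) ^ 2 * F = (1 - X) * exp A - 1)
    (hG : X * (exp A - 1) * G = X - (exp A - 1)) :
    F = bernoulliPowerSeries A * evalNegHom G := by
  have hG_neg :
      -X * (evalNegHom (exp A) - 1) * evalNegHom G = -X - (evalNegHom (exp A) - 1) := by
    simpa only [map_mul, map_sub, map_one, evalNegHom_X] using congrArg evalNegHom hG
  apply mul_left_cancel₀ (pow_ne_zero 2 (exp_sub_one_ne_zero (A := A)))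
  calc (exp A - 1) ^ 2 * F
      = -X * exp A - (evalNegHom (exp A) - 1) * exp A := by
        rw [hF, evalNegHom_exp_sub_one_mul_exp]
        ring
    _ = -X * ((evalNegHom (exp A) - 1) * exp A) * evalNegHom G := by
        linear_combination (-exp A) * hG_neg
    _ = (bernoulliPowerSeries A * (exp A - 1)) * (exp A - 1) * evalNegHom G := by
        rw [evalNegHom_exp_sub_one_mul_exp, bernoulliPowerSeries_mul_exp_sub_one]
        ring
    _ = (exp A - 1) ^ 2 * (bernoulliPowerSeries A * evalNegHom G) := by ring

end Bernoulli

end PowerSeries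

open PowerSeries

theorem zetaOne_mul (f g : PowerSeries ℚ) (k : ℕ) :
    zetaOne (f * g) k =
      ∑ m ∈ antidiagonal k, (k.choose m.1 : ℚ) * zetaOne f m.1 * zetaOne g m.2 := by
  rw [zetaOne, mul_assoc, factorial_mul_coeff_mul, mul_sum]
  refine sum_congr rfl fun m hm => ?_
  obtain rfl := mem_antidiagonal.mp hm
  simp only [zetaOne, pow_add]
  ring

theorem zetaOne_rescale (a : ℚ) (f : PowerSeries ℚ) (k : ℕ) :
    zetaOne (rescale a f) k = a ^ k * zetaOne f k := by
  rw [zetaOne, zetaOne, coeff_rescale]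
  ring

theorem zetaOne_bernoulliPowerSeries (k : ℕ) :
    zetaOne (bernoulliPowerSeries ℚ) k = (-1) ^ k * bernoulli k := by
  simp only [zetaOne, bernoulliPowerSeries, coeff_mk, Algebra.algebraMap_self, RingHom.id_apply]
  rw [mul_assoc, mul_div_cancel₀ _ (by positivity : (k ! : ℚ) ≠ 0)]

/-- For every `k ∈ ℕ₀`, `ζ^{des}(-k) = (-1)^k ∑_{i+j=k} C(k,i) B_i ζ_{EMS}(-j)`,
with `ζ^{des}`, `ζ_{EMS}` the coefficient extractions from
`F(t) = ((1-t)e^t-1)/(e^t-1)^2` and `G(t) = (t-(e^t-1))/(t(e^t-1))`. -/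
theorem zetaDes_eq_sum_zetaEMS (F G : PowerSeries ℚ)
    (hF : (PowerSeries.exp ℚ - 1) ^ 2 * F =
      (1 - PowerSeries.X) * PowerSeries.exp ℚ - 1)
    (hG : (PowerSeries.X * (PowerSeries.exp ℚ - 1)) * G =
      PowerSeries.X - (PowerSeries.exp ℚ - 1)) (k : ℕ) :
    zetaOne F k =
      (-1 : ℚ) ^ k * ∑ m ∈ Finset.HasAntidiagonal.antidiagonal k,
        (k.choose m.1 : ℚ) * bernoulli m.1 * zetaOne G m.2 := by
  rw [eq_bernoulliPowerSeries_mul_evalNegHom hF hG, zetaOne_mul, mul_sum]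
  refine sum_congr rfl fun m hm => ?_
  obtain rfl := mem_antidiagonal.mp hm
  rw [zetaOne_bernoulliPowerSeries, evalNegHom, zetaOne_rescale, pow_add]
  ring
end

section
/- Define \mathcal{G}_r(u_1,\dots,u_r; v_1,\dots,v_r) := \prod_{j=1}^r \{ 1 - (u_j v_j + \cdots + u_r v_r)(v_j^{-1} - v_{j-1}^{-1}) \} with the convention v_0^{-1} := 0, as an element of the field of rational functions (or Laurent polynomials) in u_1,\dots,u_r,v_1,\dots,v_r. Then for r \ge 2 and an additional variable z, \mathcal{G}_r\left(u_1,\dots,u_r; v_1,\dots,v_{r-1}, \frac{u_r+z}{u_r} v_{r-1}\right) = (z+1)\, \mathcal{G}_{r-1}(u_1,\dots,u_{r-2}, u_{r-1}+u_r+z; v_1,\dots,v_{r-1}). -/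
/-- `𝒢_r(u_1,…,u_r; v_1,…,v_r) = ∏_{j=1}^r {1 - (u_j v_j + ⋯ + u_r v_r)(v_j⁻¹ - v_{j-1}⁻¹)}`
with the convention `v_0⁻¹ := 0`, written with `0`-based indexing `u_0,…,u_{r-1}`,
`v_0,…,v_{r-1}`. -/
noncomputable def calG {K : Type*} [Field K] (r : ℕ) (u v : ℕ → K) : K :=
  ∏ j ∈ Finset.range r,
    (1 - (∑ i ∈ Finset.Icc j (r - 1), u i * v i) *
      ((v j)⁻¹ - if j = 0 then 0 else (v (j - 1))⁻¹))

/-- For `r ≥ 2`, substituting `v_r := ((u_r+z)/u_r) v_{r-1}` into `𝒢_r` gives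
`𝒢_r(u_1,…,u_r; v_1,…,v_{r-1}, ((u_r+z)/u_r)v_{r-1})
  = (z+1) 𝒢_{r-1}(u_1,…,u_{r-2}, u_{r-1}+u_r+z; v_1,…,v_{r-1})`,
an identity of rational functions, stated here in any field under the
nonvanishing of the denominators involved. -/
theorem calG_substitution {K : Type*} [Field K] (r : ℕ) (hr : 2 ≤ r)
    (u v : ℕ → K) (z : K)
    (hv : ∀ j, j ≤ r - 2 → v j ≠ 0)
    (hu : u (r - 1) ≠ 0) (huz : u (r - 1) + z ≠ 0) :
    calG r u (Function.update v (r - 1) (((u (r - 1) + z) / u (r - 1)) * v (r - 2))) =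
      (z + 1) * calG (r - 1) (Function.update u (r - 2) (u (r - 2) + u (r - 1) + z)) v := by
  obtain ⟨m, rfl⟩ : ∃ m, r = m + 2 := ⟨r - 2, by omega⟩
  have hu1 : u (m + 1) ≠ 0 := hu
  have huz1 : u (m + 1) + z ≠ 0 := huz
  have hvm : v m ≠ 0 := hv m (by omega)
  set V : ℕ → K := Function.update v (m + 2 - 1) (((u (m + 2 - 1) + z) / u (m + 2 - 1)) * v (m + 2 - 2)) with hV
  set U : ℕ → K := Function.update u (m + 2 - 2) (u (m + 2 - 2) + u (m + 2 - 1) + z) with hU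
  have hVeq : ∀ i ≤ m, V i = v i := fun i hi => Function.update_of_ne (by omega) _ _
  have hVtop : V (m + 1) = ((u (m + 1) + z) / u (m + 1)) * v m :=
    Function.update_self _ _ _
  have hsum : ∀ j ≤ m, (∑ i ∈ Finset.Icc j (m + 1), u i * V i)
      = ∑ i ∈ Finset.Icc j m, U i * v i := by
    intro j hj
    rw [Finset.sum_Icc_succ_top (by omega : j ≤ m + 1)]
    have h1 : ∑ i ∈ Finset.Icc j m, u i * V i = ∑ i ∈ Finset.Icc j m, u i * v i :=
      Finset.sum_congr rfl fun i hi => by rw [hVeq i (Finset.mem_Icc.mp hi).2]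
    have h2 : ∑ i ∈ Finset.Icc j m, U i * v i
        = ∑ i ∈ Finset.Icc j m, (u i * v i + if i = m then (u (m + 1) + z) * v m else 0) :=
      Finset.sum_congr rfl fun i hi => by
        by_cases h : i = m
        · rw [if_pos h, hU]
          show Function.update u m _ i * v i = _
          rw [h, Function.update_self]
          show (u m + u (m + 1) + z) * v m = _
          ring
        · rw [if_neg h, add_zero, hU]
          show Function.update u m _ i * v i = _
          rw [Function.update_of_ne h]
    have h3 : u (m + 1) * V (m + 1) = (u (m + 1) + z) * v m := by
      rw [hVtop]
      field_simp
    rw [h1, h2, Finset.sum_add_distrib, Finset.sum_ite_eq' _ m,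
      if_pos (Finset.mem_Icc.mpr ⟨hj, le_rfl⟩), h3]
  unfold calG
  rw [show m + 2 - 1 = m + 1 from rfl, show m + 1 - 1 = m from rfl,
    Finset.prod_range_succ]
  have hlast : (1 - (∑ i ∈ Finset.Icc (m + 1) (m + 1), u i * V i) *
      ((V (m + 1))⁻¹ - if m + 1 = 0 then 0 else (V (m + 1 - 1))⁻¹)) = z + 1 := by
    rw [Finset.Icc_self, Finset.sum_singleton, if_neg (Nat.succ_ne_zero m),
      show m + 1 - 1 = m from rfl, hVeq m le_rfl, hVtop]
    have hw : ((u (m + 1) + z) / u (m + 1)) * v m ≠ 0 :=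
      mul_ne_zero (div_ne_zero huz1 hu1) hvm
    field_simp
    ring
  rw [hlast, mul_comm]
  congr 1
  refine Finset.prod_congr rfl fun j hj => ?_
  have hjm : j ≤ m := by simpa [Nat.lt_succ_iff] using hj
  rw [hsum j hjm, hVeq j hjm]
  by_cases h0 : j = 0
  · rw [if_pos h0, if_pos h0]
  · rw [if_neg h0, if_neg h0, hVeq (j - 1) (by omega)]
end
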